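/- arXiv:1801.08035 — 3 statements merged into one kernel-verified Lean document; each statement's English description precedes it below -/
import Mathlib

section
/- If the set of exponents Λ admits an integral basis G (i.e., every λ_j is a finite ℤ-linear combination of elements of G), then A₁ *∼ A₂ if and only if there exists a single real vector x₀ such that b_j = a_j·exp(i⟨r_j, x₀⟩) for every j ≥ 1. -/
/-!
The condition `b j = a j * exp (i ⟨r j, x⟩)` depends on `x` only through the point
`(exp (i x k))ₖ` of the torus `ι → Circle`, and there it is a closed condition, since
`z ↦ ∏ₖ z k ^ r j k` is a continuous character. The torus is compact by Tychonoff, so the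
closed sets cut out by these conditions, having the finite intersection property, have a common
point; any lift of that point to `ι → ℝ` is the required `x₀`.
-/

theorem CompactSpace.exists_forall_mem_of_forall_exists_forall_le_mem {X : Type*}
    [TopologicalSpace X] [CompactSpace X] {P : ℕ → Set X} (hP : ∀ j, IsClosed (P j))
    (h : ∀ n, ∃ x, ∀ j ≤ n, x ∈ P j) : ∃ x, ∀ j, x ∈ P j := by
  obtain ⟨x, -, hx⟩ := isCompact_univ.inter_iInter_nonempty P hP fun u => by
    obtain ⟨x, hx⟩ := h (u.sup id)
    exact ⟨x, trivial, Set.mem_iInter₂.2 fun j hj => hx j (Finset.le_sup (f := id) hj)⟩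
  exact ⟨x, Set.mem_iInter.1 hx⟩

theorem exists_forall_comp_mem_iff_of_surjective {X Y : Type*} [TopologicalSpace X]
    [CompactSpace X] {f : Y → X} (hf : f.Surjective) {P : ℕ → Set X}
    (hP : ∀ j, IsClosed (P j)) :
    (∀ n, ∃ y, ∀ j ≤ n, f y ∈ P j) ↔ ∃ y, ∀ j, f y ∈ P j := by
  refine ⟨fun h => ?_, fun ⟨y, hy⟩ n => ⟨y, fun j _ => hy j⟩⟩
  obtain ⟨x, hx⟩ := CompactSpace.exists_forall_mem_of_forall_exists_forall_le_mem hP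
    fun n => let ⟨y, hy⟩ := h n; ⟨f y, hy⟩
  obtain ⟨y, rfl⟩ := hf x
  exact ⟨y, hx⟩

noncomputable def torusCharacter {ι : Type*} (r : ι →₀ ℤ) (z : ι → Circle) : Circle :=
  r.prod fun k c => z k ^ c

theorem continuous_torusCharacter {ι : Type*} (r : ι →₀ ℤ) : Continuous (torusCharacter r) :=
  continuous_finsetProd _ fun k _ => (continuous_apply k).zpow _

theorem torusCharacter_exp {ι : Type*} (r : ι →₀ ℤ) (x : ι → ℝ) :
    torusCharacter r (fun k => Circle.exp (x k)) = Circle.exp (r.sum fun k c => c * x k) := by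
  simp only [torusCharacter, Finsupp.prod, Finsupp.sum, ← Circle.exp_intCast_mul]
  exact (map_sum Circle.expHom _ _).symm

theorem seriesEquiv_integralBasis_iff_general {ι : Type*} (r : ℕ → ι →₀ ℤ) (a b : ℕ → ℂ) :
    (∀ n : ℕ, ∃ x : ι → ℝ, ∀ j ≤ n,
        b j = a j * Complex.exp (Complex.I *
          (((r j).sum fun k c => (c : ℝ) * x k) : ℝ))) ↔
      (∃ x : ι → ℝ, ∀ j : ℕ,
        b j = a j * Complex.exp (Complex.I *
          (((r j).sum fun k c => (c : ℝ) * x k) : ℝ))) := by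
  have hchar (j : ℕ) (x : ι → ℝ) :
      Complex.exp (Complex.I * (((r j).sum fun k c => (c : ℝ) * x k) : ℝ)) =
        torusCharacter (r j) (Circle.exp ∘ x) := by
    rw [Function.comp_def, torusCharacter_exp, Circle.coe_exp, mul_comm]
  simp only [hchar]
  exact exists_forall_comp_mem_iff_of_surjective
    (P := fun j => {z | b j = a j * torusCharacter (r j) z})
    Circle.exp_surjective.comp_left fun j =>
      isClosed_eq continuous_const <|
        continuous_const.mul <| continuous_subtype_val.comp (continuous_torusCharacter (r j))

/-- If the set of exponents `Λ = {λ₀, λ₁, …}` admits an integral basis `g`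
(each `λⱼ` is a finite `ℤ`-linear combination of the `g k`, with coordinate
vector `rⱼ`), then `A₁ *∼ A₂` (i.e. for each `n` there is `xₙ` with
`bⱼ = aⱼ exp(i⟨rⱼ, xₙ⟩)` for `j ≤ n`) iff there is a single vector `x₀` with
`bⱼ = aⱼ exp(i⟨rⱼ, x₀⟩)` for every `j`. -/
theorem seriesEquiv_integralBasis_iff {ι : Type*} (lam : ℕ → ℝ)
    (hinj : Function.Injective lam)
    (g : ι → ℝ) (hg : LinearIndependent ℚ g)
    (r : ℕ → ι →₀ ℤ) (hr : ∀ j, lam j = (r j).sum fun k c => (c : ℝ) * g k)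
    (a b : ℕ → ℂ) :
    (∀ n : ℕ, ∃ x : ι → ℝ, ∀ j ≤ n,
        b j = a j * Complex.exp (Complex.I *
          (((r j).sum fun k c => (c : ℝ) * x k) : ℝ))) ↔
      (∃ x : ι → ℝ, ∀ j : ℕ,
        b j = a j * Complex.exp (Complex.I *
          (((r j).sum fun k c => (c : ℝ) * x k) : ℝ))) :=
  seriesEquiv_integralBasis_iff_general r a b
end

section
/- Let f₁(s) = Σ_{j=1}^n a_j e^{λ_j s} and f₂(s) = Σ_{j=1}^n b_j e^{λ_j s} be equivalent exponential polynomials with distinct real exponents λ_j. Then for any σ₀ < σ₁ and any ε > 0, there exists a relatively dense set of real numbers τ such that |f₁(s + iτ) − f₂(s)| < ε for every s in the strip {σ + it : σ₀ ≤ σ ≤ σ₁}. -/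
/-!
Extend `ψ` to a `ℚ`-linear map `ℝ → ℝ`. By Kronecker's theorem the point `(e^{iψ(λⱼ)})ⱼ` lies
in the closure of the one-parameter subgroup `τ ↦ (e^{iλⱼτ})ⱼ` of the compact torus; compactness
makes the set of `τ` at which this subgroup comes `δ`-close to the point relatively dense, and for
such `τ` the two sums differ by at most `δ ∑ |aⱼ| e^{λⱼ Re s}` on the strip.

Kronecker's theorem is proved by Bohr's method. For `F(τ) = ∑ₖ e^{i(μₖτ - ψ(μₖ))}` with `m` terms,
`|F|^{2p}` is a trigonometric polynomial whose constant term counts the pairs of `p`-tuples with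
equal frequency sums (additivity of `ψ` makes their phases cancel). By Cauchy–Schwarz there are at
least `m^{2p} / (p+1)^m` such pairs, and the supremum of a trigonometric polynomial dominates its
mean value, so `sup |F| ≥ m (p+1)^{-m/2p} → m`. With the frequency `0` among the `μₖ`, a value of
`|F|` close to `m` forces every term to be close to `1`.
-/

noncomputable section

/-- Bohr's equivalence relation on finite exponential sums with exponents `lam`:
there is a `ℚ`-linear map `ψ` from the `ℚ`-span of the exponents to `ℝ`
with `bⱼ = aⱼ e^{i ψ(λⱼ)}` for all `j`. -/
def FinEquiv {n : ℕ} (lam : Fin n → ℝ) (a b : Fin n → ℂ) : Prop :=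
  ∃ ψ : (Submodule.span ℚ (Set.range lam)) →ₗ[ℚ] ℝ,
    ∀ j, b j = a j *
      Complex.exp (Complex.I *
        (ψ ⟨lam j, Submodule.subset_span (Set.mem_range_self j)⟩ : ℝ))

open Complex Finset Filter Topology Set MeasureTheory

variable {ι κ : Type*} [Fintype ι] [Fintype κ]

theorem Finset.card_sq_le_card_image_mul_card_filter_eq {α β : Type*} [DecidableEq β]
    (s : Finset α) (f : α → β) :
    #s ^ 2 ≤ #(s.image f) * #{x ∈ s ×ˢ s | f x.1 = f x.2} :=
  calc #s ^ 2 = (∑ b ∈ s.image f, #{a ∈ s | f a = b}) ^ 2 := by rw [card_eq_sum_card_image f s]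
    _ ≤ #(s.image f) * ∑ b ∈ s.image f, #{a ∈ s | f a = b} ^ 2 := sq_sum_le_card_mul_sum_sq
    _ = #(s.image f) * #{x ∈ s ×ˢ s | f x.1 = f x.2} := by
      rw [card_eq_sum_card_fiberwise (f := fun x => f x.1) (t := s.image f)
        fun x hx => mem_image_of_mem f (mem_product.1 (mem_filter.1 hx).1).1]
      congr 1
      refine sum_congr rfl fun b _ => ?_
      rw [sq, ← card_product, filter_filter]
      congr 1
      ext ⟨x, y⟩
      simp only [mem_filter, mem_product]
      aesop

theorem card_image_sum_comp_le (μ : κ → ℝ) (p : ℕ) :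
    #((univ : Finset (Fin p → κ)).image fun g => ∑ i, μ (g i)) ≤ (p + 1) ^ Fintype.card κ := by
  classical
  have hsum (g : Fin p → κ) : ∑ i, μ (g i) = ∑ k, (#{i | g i = k} : ℝ) * μ k := by
    rw [← sum_fiberwise univ g]
    refine sum_congr rfl fun k _ => ?_
    rw [sum_congr rfl fun i hi => by rw [(mem_filter.1 hi).2], sum_const, nsmul_eq_mul]
  calc _ ≤ #((univ : Finset (κ → Fin (p + 1))).image fun c => ∑ k, (c k : ℝ) * μ k) := by
        refine card_le_card fun x hx => ?_
        obtain ⟨g, -, rfl⟩ := mem_image.1 hx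
        have hle (k : κ) : #{i | g i = k} < p + 1 :=
          Nat.lt_succ_of_le ((card_filter_le _ _).trans (by simp))
        exact mem_image.2 ⟨fun k => ⟨_, hle k⟩, mem_univ _, (hsum g).symm⟩
    _ ≤ _ := card_image_le.trans (by simp)

theorem card_pow_sq_le_succ_pow_mul_card_sum_comp_eq (μ : κ → ℝ) (p : ℕ) :
    (Fintype.card κ ^ p) ^ 2 ≤ (p + 1) ^ Fintype.card κ *
      #{x : (Fin p → κ) × (Fin p → κ) | ∑ i, μ (x.1 i) = ∑ i, μ (x.2 i)} := by
  have := card_sq_le_card_image_mul_card_filter_eq univ fun g : Fin p → κ => ∑ i, μ (g i)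
  rw [univ_product_univ, card_univ, Fintype.card_fun, Fintype.card_fin] at this
  exact this.trans (Nat.mul_le_mul_right _ (card_image_sum_comp_le μ p))

theorem tendsto_inv_smul_integral_exp_mul_I (a : ℝ) :
    Tendsto (fun T : ℝ => T⁻¹ • ∫ τ in (0)..T, exp (a * τ * I)) atTop
      (𝓝 (if a = 0 then 1 else 0)) := by
  split_ifs with ha
  · subst ha
    refine tendsto_const_nhds.congr' ?_
    filter_upwards [eventually_gt_atTop 0] with T hT
    simp [hT.ne']
  · have haI : (a : ℂ) * I ≠ 0 := by simp [ha]
    refine squeeze_zero_norm' ?_ (by simpa using tendsto_inv_atTop_zero.const_mul (2 / |a|))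
    filter_upwards [eventually_gt_atTop 0] with T hT
    simp_rw [mul_right_comm _ _ I]
    rw [integral_exp_mul_complex haI, norm_smul, norm_div, norm_inv, Real.norm_of_nonneg hT.le]
    have hexp (t : ℝ) : ‖exp (a * I * t)‖ = 1 := by
      rw [mul_right_comm, ← ofReal_mul, norm_exp_ofReal_mul_I]
    have hnum : ‖exp (a * I * T) - exp (a * I * (0 : ℝ))‖ ≤ 2 :=
      (norm_sub_le _ _).trans (by rw [hexp, hexp]; norm_num)
    rw [norm_mul, norm_I, mul_one, norm_real, Real.norm_eq_abs, mul_comm]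
    gcongr

theorem tendsto_inv_smul_integral_sum_mul_exp (c : ι → ℂ) (a : ι → ℝ) :
    Tendsto (fun T : ℝ => T⁻¹ • ∫ τ in (0)..T, ∑ i, c i * exp (a i * τ * I)) atTop
      (𝓝 (∑ i with a i = 0, c i)) := by
  have hint (i : ι) (T : ℝ) :
      IntervalIntegrable (fun τ : ℝ => c i * exp (a i * τ * I)) volume 0 T :=
    (by fun_prop : Continuous fun τ : ℝ => c i * exp (a i * τ * I)).intervalIntegrable _ _
  have hconst : ∑ i with a i = 0, c i = ∑ i, c i * if a i = 0 then 1 else 0 := by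
    simp_rw [sum_filter, mul_ite, mul_one, mul_zero]
  rw [hconst]
  refine (tendsto_finsetSum _ fun i _ =>
    (tendsto_inv_smul_integral_exp_mul_I (a i)).const_mul (c i)).congr fun T => ?_
  rw [intervalIntegral.integral_finsetSum fun i _ => hint i T, smul_sum]
  refine sum_congr rfl fun i _ => ?_
  rw [intervalIntegral.integral_const_mul, mul_smul_comm]

theorem exists_re_sum_mul_exp_gt (c : ι → ℂ) (a : ι → ℝ) {ε : ℝ} (hε : 0 < ε) :
    ∃ τ : ℝ, (∑ i with a i = 0, c i).re - ε < (∑ i, c i * exp (a i * τ * I)).re := by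
  by_contra! h
  set P : ℝ → ℂ := fun τ => ∑ i, c i * exp (a i * τ * I)
  have hP : Continuous P := by fun_prop
  have hmean : (∑ i with a i = 0, c i).re ≤ (∑ i with a i = 0, c i).re - ε := by
    refine le_of_tendsto
      ((continuous_re.tendsto _).comp (tendsto_inv_smul_integral_sum_mul_exp c a)) ?_
    filter_upwards [eventually_gt_atTop 0] with T hT
    have hle : ∫ τ in (0)..T, (P τ).re ≤ T * ((∑ i with a i = 0, c i).re - ε) := by
      refine (intervalIntegral.integral_mono_on hT.le
        ((continuous_re.comp hP).intervalIntegrable (μ := volume) 0 T)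
        intervalIntegrable_const fun τ _ => h τ).trans_eq ?_
      rw [intervalIntegral.integral_const, smul_eq_mul, sub_zero]
    rw [Function.comp_apply, smul_re, smul_eq_mul, ← RCLike.re_to_complex,
      ← intervalIntegral.intervalIntegral_re (hP.intervalIntegrable (μ := volume) 0 T),
      inv_mul_le_iff₀ hT]
    exact hle
  linarith

theorem exists_succ_pow_mul_pow_lt_one (k : ℕ) {q : ℝ} (hq₀ : 0 ≤ q) (hq₁ : q < 1) :
    ∃ p : ℕ, ((p : ℝ) + 1) ^ k * q ^ p < 1 := by
  have h := (tendsto_pow_const_mul_const_pow_of_lt_one k hq₀ hq₁).const_mul (2 ^ k)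
  rw [mul_zero] at h
  obtain ⟨p, hp, hp₁⟩ := ((h.eventually (gt_mem_nhds one_pos)).and (eventually_ge_atTop 1)).exists
  refine ⟨p, lt_of_le_of_lt ?_ hp⟩
  have : (p : ℝ) + 1 ≤ 2 * p := by
    have : (1 : ℝ) ≤ p := by exact_mod_cast hp₁
    linarith
  calc ((p : ℝ) + 1) ^ k * q ^ p ≤ (2 * p) ^ k * q ^ p := by gcongr
    _ = 2 ^ k * ((p : ℝ) ^ k * q ^ p) := by ring

theorem ofReal_norm_sum_exp_pow_eq (μ : κ → ℝ) (ψ : ℝ →+ ℝ) (p : ℕ) (τ : ℝ) :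
    ((‖∑ k, exp ((μ k * τ - ψ (μ k)) * I)‖ ^ (2 * p) : ℝ) : ℂ) =
      ∑ x : (Fin p → κ) × (Fin p → κ),
        exp (-ψ (∑ i, μ (x.1 i) - ∑ i, μ (x.2 i)) * I) *
          exp ((∑ i, μ (x.1 i) - ∑ i, μ (x.2 i) : ℝ) * τ * I) := by
  have hpow : (∑ k, exp ((μ k * τ - ψ (μ k)) * I)) ^ p =
      ∑ g : Fin p → κ, exp (((∑ i, μ (g i)) * τ - ψ (∑ i, μ (g i))) * I) := by
    rw [sum_pow', Fintype.piFinset_univ]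
    refine sum_congr rfl fun g _ => ?_
    rw [← exp_sum, map_sum]
    push_cast
    simp only [sum_mul, sub_mul, sum_sub_distrib]
  rw [pow_mul', ← norm_pow, ofReal_pow, ← mul_conj', hpow, map_sum, sum_mul_sum,
    ← Fintype.sum_prod_type']
  refine sum_congr rfl fun x _ => ?_
  rw [← exp_conj, ← exp_add, ← exp_add, map_sub]
  congr 1
  simp only [map_mul, map_sub, conj_ofReal, conj_I]
  push_cast
  ring

theorem exists_lt_norm_sum_exp (μ : κ → ℝ) (ψ : ℝ →+ ℝ) {r : ℝ} (hr : r < Fintype.card κ) :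
    ∃ τ : ℝ, r < ‖∑ k, exp ((μ k * τ - ψ (μ k)) * I)‖ := by
  rcases lt_or_ge r 0 with hr₀ | hr₀
  · exact ⟨0, hr₀.trans_le (norm_nonneg _)⟩
  set m := Fintype.card κ
  have hm : (0 : ℝ) < m := hr₀.trans_lt hr
  obtain ⟨p, hp⟩ := exists_succ_pow_mul_pow_lt_one m (sq_nonneg (r / m))
    (by rw [sq_lt_one_iff_abs_lt_one, abs_lt, lt_div_iff₀ hm, div_lt_one hm]; constructor <;>
      linarith)
  have hp₀ : p ≠ 0 := by rintro rfl; simp at hp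
  set S : (Fin p → κ) → ℝ := fun g => ∑ i, μ (g i)
  set N := #{x : (Fin p → κ) × (Fin p → κ) | S x.1 - S x.2 = 0}
  have hcount : ((m : ℝ) ^ p) ^ 2 ≤ ((p : ℝ) + 1) ^ m * N := by
    simp_rw [N, sub_eq_zero]
    exact_mod_cast card_pow_sq_le_succ_pow_mul_card_sum_comp_eq μ p
  have hN : r ^ (2 * p) < N := by
    have hN₀ : (0 : ℝ) < N :=
      pos_of_mul_pos_right ((by positivity : (0 : ℝ) < ((m : ℝ) ^ p) ^ 2).trans_le hcount)
        (by positivity)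
    calc r ^ (2 * p) = ((r / m) ^ 2) ^ p * ((m : ℝ) ^ p) ^ 2 := by
          rw [← pow_mul, ← pow_mul, mul_comm p 2, ← mul_pow, div_mul_cancel₀ r hm.ne']
      _ ≤ ((r / m) ^ 2) ^ p * (((p : ℝ) + 1) ^ m * N) := by gcongr
      _ = (((p : ℝ) + 1) ^ m * ((r / m) ^ 2) ^ p) * N := by ring
      _ < N := mul_lt_of_lt_one_left hN₀ hp
  obtain ⟨τ, hτ⟩ := exists_re_sum_mul_exp_gt
    (fun x : (Fin p → κ) × (Fin p → κ) => exp (-ψ (S x.1 - S x.2) * I)) (fun x => S x.1 - S x.2)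
    (sub_pos.2 hN)
  have hconst : ∑ x : (Fin p → κ) × (Fin p → κ) with S x.1 - S x.2 = 0,
      exp (-ψ (S x.1 - S x.2) * I) = N := by
    rw [sum_congr rfl fun x hx => by rw [(mem_filter.1 hx).2, map_zero, ofReal_zero, neg_zero,
      zero_mul, exp_zero], sum_const, nsmul_one]
  rw [hconst, natCast_re, sub_sub_cancel, ← ofReal_norm_sum_exp_pow_eq, ofReal_re] at hτ
  exact ⟨τ, (pow_lt_pow_iff_left₀ hr₀ (norm_nonneg _) (by omega)).1 hτ⟩

theorem norm_sub_sq_lt_of_card_sub_lt_norm_sum {z : κ → ℂ} (hz : ∀ k, ‖z k‖ = 1) {η : ℝ}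
    (h : Fintype.card κ - η < ‖∑ k, z k‖) (k l : κ) : ‖z k - z l‖ ^ 2 < 4 * η := by
  classical
  have hle : ‖∑ k, z k‖ ≤ Fintype.card κ := (norm_sum_le _ _).trans (by simp [hz])
  rcases eq_or_ne k l with rfl | hkl
  · simp only [sub_self, norm_zero]; linarith
  have hl : l ∈ univ.erase k := mem_erase.2 ⟨hkl.symm, mem_univ l⟩
  set R := (univ.erase k).erase l
  have hz_sum : ∑ i, z i = z k + z l + ∑ i ∈ R, z i := by
    rw [add_assoc, add_sum_erase _ _ hl, add_sum_erase _ _ (mem_univ k)]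
  have hcard : (Fintype.card κ : ℝ) = 1 + 1 + ∑ i ∈ R, ‖z i‖ :=
    calc (Fintype.card κ : ℝ) = ∑ i, ‖z i‖ := by simp [hz]
      _ = ‖z k‖ + ‖z l‖ + ∑ i ∈ R, ‖z i‖ := by
        rw [add_assoc, add_sum_erase _ (fun i => ‖z i‖) hl,
          add_sum_erase _ (fun i => ‖z i‖) (mem_univ k)]
      _ = 1 + 1 + ∑ i ∈ R, ‖z i‖ := by rw [hz, hz]
  have hadd : 2 - η < ‖z k + z l‖ := by
    have h₁ := norm_add_le (z k + z l) (∑ i ∈ R, z i)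
    rw [← hz_sum] at h₁
    linarith [norm_sum_le R z]
  have hadd_le : ‖z k + z l‖ ≤ 2 := (norm_add_le _ _).trans (by rw [hz, hz]; norm_num)
  have hpar := parallelogram_law_with_norm ℝ (z k) (z l)
  rw [hz, hz] at hpar
  nlinarith [norm_nonneg (z k + z l)]

theorem exists_forall_norm_exp_sub_exp_lt (lam : ι → ℝ) (ψ : ℝ →+ ℝ)
    {δ : ℝ} (hδ : 0 < δ) : ∃ τ : ℝ, ∀ j, ‖exp (lam j * τ * I) - exp (ψ (lam j) * I)‖ < δ := by
  obtain ⟨τ, hτ⟩ := exists_lt_norm_sum_exp (fun k : Option ι => k.elim 0 lam) ψ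
    (r := Fintype.card (Option ι) - δ ^ 2 / 4) (by linarith [(by positivity : 0 < δ ^ 2 / 4)])
  refine ⟨τ, fun j => ?_⟩
  have h := norm_sub_sq_lt_of_card_sub_lt_norm_sum
    (fun _ => by rw [← ofReal_mul, ← ofReal_sub, norm_exp_ofReal_mul_I]) hτ (some j) none
  simp only [Option.elim, ofReal_zero, zero_mul, map_zero, sub_zero, exp_zero] at h
  calc ‖exp (lam j * τ * I) - exp (ψ (lam j) * I)‖
      = ‖exp (ψ (lam j) * I) * (exp ((lam j * τ - ψ (lam j)) * I) - 1)‖ := by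
        rw [mul_sub, mul_one, ← exp_add]
        congr 3
        ring
    _ = ‖exp ((lam j * τ - ψ (lam j)) * I) - 1‖ := by rw [norm_mul, norm_exp_ofReal_mul_I, one_mul]
    _ < δ := (pow_lt_pow_iff_left₀ (norm_nonneg _) hδ.le two_ne_zero).1 (by linarith)

def IsRelativelyDense (D : Set ℝ) : Prop :=
  ∃ l > (0 : ℝ), ∀ x : ℝ, ∃ τ ∈ Icc x (x + l), τ ∈ D

theorem IsRelativelyDense.mono {D E : Set ℝ} (hD : IsRelativelyDense D) (hDE : D ⊆ E) :
    IsRelativelyDense E :=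
  let ⟨l, hl, h⟩ := hD
  ⟨l, hl, fun x => (h x).imp fun _ hτ => ⟨hτ.1, hDE hτ.2⟩⟩

theorem isRelativelyDense_preimage_of_mem_closure_range {G : Type*} [Group G] [TopologicalSpace G]
    [IsTopologicalGroup G] [CompactSpace G] {φ : ℝ → G} (hφ : ∀ s t, φ (s + t) = φ s * φ t)
    {U : Set G} (hU : IsOpen U) {c : G} (hc : c ∈ closure (range φ)) (hcU : c ∈ U) :
    IsRelativelyDense (φ ⁻¹' U) := by
  have hφ_inv (s : ℝ) : (φ s)⁻¹ = φ (-s) := by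
    refine inv_eq_of_mul_eq_one_right ?_
    rw [← hφ, add_neg_cancel]
    simpa using (hφ 0 0).symm
  have hinv_mul : ∀ y ∈ closure (range φ), y⁻¹ * c ∈ closure (range φ) := fun y hy =>
    map_mem_closure₂ (f := fun y c => y⁻¹ * c) (by fun_prop) hy hc <| by
      rintro _ ⟨s, rfl⟩ _ ⟨t, rfl⟩
      exact ⟨-s + t, by rw [hφ, hφ_inv]⟩
  have hcover : closure (range φ) ⊆ ⋃ t : ℝ, (· * φ t) ⁻¹' U := fun y hy => by
    obtain ⟨_, hmem, t, rfl⟩ := mem_closure_iff.1 (hinv_mul y hy) _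
      (hU.preimage (continuous_const_mul y)) (by simpa using hcU)
    exact mem_iUnion.2 ⟨t, hmem⟩
  obtain ⟨T, hT⟩ := isClosed_closure.isCompact.elim_finite_subcover _
    (fun t => hU.preimage (continuous_mul_const (φ t))) hcover
  set M := ∑ t ∈ T, |t|
  have hM : 0 ≤ M := sum_nonneg fun t _ => abs_nonneg t
  refine ⟨2 * M + 1, by linarith, fun x => ?_⟩
  obtain ⟨t, ht, hmem⟩ := mem_iUnion₂.1 (hT (subset_closure (mem_range_self (x + M))))
  have htM : |t| ≤ M := single_le_sum (fun t _ => abs_nonneg t) ht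
  refine ⟨x + M + t, ⟨by linarith [neg_abs_le t], by linarith [le_abs_self t]⟩, ?_⟩
  rw [Set.mem_preimage, hφ]
  exact hmem

theorem isRelativelyDense_forall_norm_exp_sub_exp_lt (lam : ι → ℝ)
    (ψ : ℝ →+ ℝ) {δ : ℝ} (hδ : 0 < δ) :
    IsRelativelyDense {τ | ∀ j, ‖exp (lam j * τ * I) - exp (ψ (lam j) * I)‖ < δ} := by
  set φ : ℝ → ι → Circle := fun τ j => Circle.exp (lam j * τ)
  set c : ι → Circle := fun j => Circle.exp (ψ (lam j))
  have hdist (τ : ℝ) {ε : ℝ} (hε : 0 < ε) :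
      dist (φ τ) c < ε ↔ ∀ j, ‖exp (lam j * τ * I) - exp (ψ (lam j) * I)‖ < ε := by
    refine (dist_pi_lt_iff hε).trans (forall_congr' fun j => ?_)
    rw [show dist (φ τ j) (c j) = ‖(φ τ j : ℂ) - c j‖ from dist_eq_norm (φ τ j : ℂ) (c j)]
    simp only [φ, c, Circle.coe_exp, ofReal_mul]
  have hc : c ∈ closure (range φ) := Metric.mem_closure_iff.2 fun ε hε =>
    let ⟨τ, hτ⟩ := exists_forall_norm_exp_sub_exp_lt lam ψ hε
    ⟨φ τ, mem_range_self τ, by rw [dist_comm]; exact (hdist τ hε).2 hτ⟩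
  have hφ (s t : ℝ) : φ (s + t) = φ s * φ t := by
    funext j
    simp [φ, mul_add, Circle.exp_add]
  exact (isRelativelyDense_preimage_of_mem_closure_range hφ Metric.isOpen_ball hc
    (Metric.mem_ball_self hδ)).mono fun τ hτ => (hdist τ hδ).1 hτ

theorem norm_exp_ofReal_mul_le_max (x : ℝ) {σ₀ σ₁ : ℝ} {s : ℂ} (hs₀ : σ₀ ≤ s.re)
    (hs₁ : s.re ≤ σ₁) : ‖exp (x * s)‖ ≤ max (Real.exp (x * σ₀)) (Real.exp (x * σ₁)) := by
  rw [norm_exp, re_ofReal_mul, ← Real.exp_monotone.map_max, Real.exp_le_exp]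
  rcases le_total 0 x with hx | hx
  · exact le_max_of_le_right (mul_le_mul_of_nonneg_left hs₁ hx)
  · exact le_max_of_le_left (mul_le_mul_of_nonpos_left hs₀ hx)

theorem exists_pos_forall_norm_sum_mul_sub_lt (a : ι → ℂ) (lam : ι → ℝ)
    (σ₀ σ₁ : ℝ) {ε : ℝ} (hε : 0 < ε) :
    ∃ δ > 0, ∀ u v : ι → ℂ, (∀ j, ‖u j - v j‖ < δ) → ∀ s : ℂ, σ₀ ≤ s.re → s.re ≤ σ₁ →
      ‖∑ j, a j * exp (lam j * s) * u j - ∑ j, a j * exp (lam j * s) * v j‖ < ε := by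
  set B := ∑ j, ‖a j‖ * max (Real.exp (lam j * σ₀)) (Real.exp (lam j * σ₁))
  have hB : 0 ≤ B := by positivity
  refine ⟨ε / (B + 1), by positivity, fun u v huv s hs₀ hs₁ => ?_⟩
  calc ‖∑ j, a j * exp (lam j * s) * u j - ∑ j, a j * exp (lam j * s) * v j‖
      = ‖∑ j, a j * exp (lam j * s) * (u j - v j)‖ := by simp_rw [mul_sub, sum_sub_distrib]
    _ ≤ ∑ j, ‖a j‖ * max (Real.exp (lam j * σ₀)) (Real.exp (lam j * σ₁)) * (ε / (B + 1)) := by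
        refine (norm_sum_le _ _).trans (sum_le_sum fun j _ => ?_)
        rw [norm_mul, norm_mul]
        gcongr
        · exact norm_exp_ofReal_mul_le_max _ hs₀ hs₁
        · exact (huv j).le
    _ = B * (ε / (B + 1)) := by rw [sum_mul]
    _ < ε := by
        rw [mul_div_assoc', div_lt_iff₀ (by positivity)]
        linarith

theorem finEquiv_translation_numbers_general {n : ℕ} (lam : Fin n → ℝ) (a b : Fin n → ℂ)
    (heq : FinEquiv lam a b) (σ₀ σ₁ : ℝ) (ε : ℝ) (hε : 0 < ε) :
    ∃ l > (0 : ℝ), ∀ x : ℝ, ∃ τ ∈ Set.Icc x (x + l),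
      ∀ s : ℂ, σ₀ ≤ s.re → s.re ≤ σ₁ →
        ‖(∑ j, a j * Complex.exp ((lam j : ℂ) * (s + Complex.I * (τ : ℂ)))) -
          ∑ j, b j * Complex.exp ((lam j : ℂ) * s)‖ < ε := by
  obtain ⟨ψ, hψ⟩ := heq
  obtain ⟨Ψ, rfl⟩ := ψ.exists_extend
  obtain ⟨δ, hδ, hstrip⟩ := exists_pos_forall_norm_sum_mul_sub_lt a lam σ₀ σ₁ hε
  refine (isRelativelyDense_forall_norm_exp_sub_exp_lt lam Ψ.toAddMonoidHom hδ).mono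
    fun τ hτ s hs₀ hs₁ => ?_
  convert hstrip _ _ hτ s hs₀ hs₁ using 3 <;> refine sum_congr rfl fun j _ => ?_
  · rw [mul_assoc, ← exp_add]
    congr 2
    ring
  · rw [hψ j]
    simp only [LinearMap.coe_comp, Function.comp_apply, Submodule.subtype_apply,
      LinearMap.toAddMonoidHom_coe]
    rw [mul_comm I]
    ring

/-- If `f₁(s) = ∑ aⱼ e^{λⱼ s}` and `f₂(s) = ∑ bⱼ e^{λⱼ s}` are equivalent
exponential polynomials, then for any strip `σ₀ ≤ Re s ≤ σ₁` and `ε > 0` there is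
a relatively dense set of real `τ` with `|f₁(s+iτ) − f₂(s)| < ε` on the strip. -/
theorem finEquiv_translation_numbers {n : ℕ} (lam : Fin n → ℝ)
    (hinj : Function.Injective lam) (a b : Fin n → ℂ)
    (heq : FinEquiv lam a b) (σ₀ σ₁ : ℝ) (hσ : σ₀ < σ₁) (ε : ℝ) (hε : 0 < ε) :
    ∃ l > (0 : ℝ), ∀ x : ℝ, ∃ τ ∈ Set.Icc x (x + l),
      ∀ s : ℂ, σ₀ ≤ s.re → s.re ≤ σ₁ →
        ‖(∑ j, a j * Complex.exp ((lam j : ℂ) * (s + Complex.I * (τ : ℂ)))) -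
          ∑ j, b j * Complex.exp ((lam j : ℂ) * s)‖ < ε :=
  finEquiv_translation_numbers_general lam a b heq σ₀ σ₁ ε hε
end
end

section
/- For a finite set of exponents Λ = {λ₁,...,λₙ}, each equivalence class of trigonometric polynomials P(t) = Σ_{j=1}^n a_j e^{iλ_j t} under the Bohr equivalence relation is sequentially compact with respect to the topology of uniform convergence on ℝ: every sequence of pairwise equivalent trigonometric polynomials with frequencies in Λ has a subsequence converging uniformly on ℝ to a trigonometric polynomial in the same equivalence class. -/
/-!
Choose a `ℚ`-basis `β` of the `ℚ`-span of the frequencies and a common denominator `D` of the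
coordinates of the `λ_j`, so that `D • λ_j = ∑ p_ji β_i` with `p_ji ∈ ℤ`. A `ℚ`-linear
`ψ` is free on the `β_i`, and `exp (i ψ λ_j) = ∏ z_i ^ p_ji` with `z_i = exp (i ψ β_i / D)`.
Hence the class of `a` is the image of the compact torus `Circleᵏ` under a continuous map, so it
is compact, and a subsequence of coefficient vectors converges in it; since the exponentials
have modulus one, coefficientwise convergence is uniform convergence on `ℝ`.
-/

noncomputable section

open Filter Topology

theorem Circle.coe_exp_eq_exp_I_mul (t : ℝ) : Circle.exp t = Complex.exp (Complex.I * t) := by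
  rw [Circle.coe_exp, mul_comm]

theorem Circle.exp_sum {ι : Type*} (s : Finset ι) (f : ι → ℝ) :
    Circle.exp (∑ i ∈ s, f i) = ∏ i ∈ s, Circle.exp (f i) :=
  map_sum Circle.expHom f s

theorem Circle.exp_linearMap_eq_prod_zpow {ι W : Type*} [Fintype ι] [AddCommGroup W]
    [Module ℚ W] (β : Module.Basis ι ℚ W) (ψ : W →ₗ[ℚ] ℝ) {v : W} {D : ℤ} {p : ι → ℤ}
    {x : ι → ℝ} (hp : ∀ i, (D : ℚ) * β.repr v i = p i) (hx : ∀ i, ψ (β i) = D * x i) :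
    Circle.exp (ψ v) = ∏ i, Circle.exp (x i) ^ p i := by
  have hψv : ψ v = ∑ i, (p i : ℝ) * x i := by
    conv_lhs => rw [← β.sum_repr v]
    simp only [map_sum, map_smul, hx, Rat.smul_def]
    refine Finset.sum_congr rfl fun i _ => ?_
    have hpi : (p i : ℝ) = D * β.repr v i := by exact_mod_cast (hp i).symm
    rw [hpi]
    ring
  simp only [hψv, Circle.exp_sum, Circle.exp_intCast_mul]

theorem tendstoUniformly_sum_mul_of_tendsto {ι α β R : Type*} [Fintype ι] [NormedRing R]
    {l : Filter β} {a : β → ι → R} {c : ι → R} {f : ι → α → R} {C : ℝ}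
    (hf : ∀ i x, ‖f i x‖ ≤ C) (ha : Tendsto a l (𝓝 c)) :
    TendstoUniformly (fun m x => ∑ i, a m i * f i x) (fun x => ∑ i, c i * f i x) l := by
  have hsmall : Tendsto (fun m => ∑ i, ‖c i - a m i‖ * C) l (𝓝 0) := by
    simpa using tendsto_finsetSum (Finset.univ : Finset ι) fun i _ =>
      ((tendsto_pi_nhds.1 ha i).const_sub (c i)).norm.mul_const C
  rw [Metric.tendstoUniformly_iff]
  intro ε hε
  filter_upwards [hsmall.eventually_lt_const hε] with m hm x
  calc dist (∑ i, c i * f i x) (∑ i, a m i * f i x)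
      = ‖∑ i, (c i - a m i) * f i x‖ := by
        simp only [dist_eq_norm, ← Finset.sum_sub_distrib, sub_mul]
    _ ≤ ∑ i, ‖c i - a m i‖ * C :=
        (norm_sum_le _ _).trans <| Finset.sum_le_sum fun i _ =>
          (norm_mul_le _ _).trans <| mul_le_mul_of_nonneg_left (hf i x) (norm_nonneg _)
    _ < ε := hm

theorem isCompact_setOf_finEquiv {n : ℕ} (lam : Fin n → ℝ) (a : Fin n → ℂ) :
    IsCompact {b | FinEquiv lam a b} := by
  set V := Submodule.span ℚ (Set.range lam)
  have : FiniteDimensional ℚ V := FiniteDimensional.span_of_finite ℚ (Set.finite_range lam)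
  let β := Module.finBasis ℚ V
  let e : Fin n → V := fun j => ⟨lam j, Submodule.subset_span (Set.mem_range_self j)⟩
  obtain ⟨⟨D, hD⟩, hint⟩ := IsLocalization.exist_integer_multiples_of_finite (nonZeroDivisors ℤ)
    (fun ji : Fin n × Fin (Module.finrank ℚ V) => β.repr (e ji.1) ji.2)
  choose p hp using hint
  have hD0 : (D : ℝ) ≠ 0 := by exact_mod_cast nonZeroDivisors.ne_zero hD
  let F : (Fin (Module.finrank ℚ V) → Circle) → Fin n → ℂ :=
    fun z j => a j * ((∏ i, z i ^ p (j, i) : Circle) : ℂ)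
  suffices {b | FinEquiv lam a b} = Set.range F from this ▸ isCompact_range (by fun_prop)
  ext b
  constructor
  · rintro ⟨ψ, hψ⟩
    refine ⟨fun i => Circle.exp (ψ (β i) / D), funext fun j => ?_⟩
    rw [hψ j, ← Circle.coe_exp_eq_exp_I_mul, Circle.exp_linearMap_eq_prod_zpow β ψ
      (x := fun i => ψ (β i) / D) (fun i => (hp (j, i)).symm)
      (fun i => (mul_div_cancel₀ _ hD0).symm)]
  · rintro ⟨z, rfl⟩
    choose x hx using fun i => Circle.exp_surjective (z i)
    refine ⟨β.constr ℚ fun i => D * x i, fun j => ?_⟩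
    rw [← Circle.coe_exp_eq_exp_I_mul, Circle.exp_linearMap_eq_prod_zpow β _
      (fun i => (hp (j, i)).symm) (fun i => β.constr_basis ℚ _ i)]
    simp only [F, hx]

theorem finEquiv_class_seqCompact_general {n : ℕ} (lam : Fin n → ℝ)
    (A : ℕ → Fin n → ℂ)
    (hequiv : ∀ l m : ℕ, FinEquiv lam (A l) (A m)) :
    ∃ φ : ℕ → ℕ, StrictMono φ ∧ ∃ c : Fin n → ℂ, FinEquiv lam (A 0) c ∧
      TendstoUniformly
        (fun m (t : ℝ) => ∑ j, A (φ m) j * Complex.exp (Complex.I * (lam j : ℂ) * (t : ℂ)))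
        (fun t : ℝ => ∑ j, c j * Complex.exp (Complex.I * (lam j : ℂ) * (t : ℂ)))
        Filter.atTop := by
  obtain ⟨c, hc, φ, hφ, hlim⟩ :=
    (isCompact_setOf_finEquiv lam (A 0)).tendsto_subseq fun m => hequiv 0 m
  have hunit : ∀ j (t : ℝ), ‖Complex.exp (Complex.I * (lam j : ℂ) * (t : ℂ))‖ ≤ 1 := by
    intro j t
    rw [mul_assoc, ← Complex.ofReal_mul, ← Circle.coe_exp_eq_exp_I_mul, Circle.norm_coe]
  exact ⟨φ, hφ, c, hc, tendstoUniformly_sum_mul_of_tendsto hunit hlim⟩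

/-- Each Bohr equivalence class of trigonometric polynomials with frequencies in a
finite set `Λ` is sequentially compact for uniform convergence on `ℝ`: every
sequence of pairwise equivalent trigonometric polynomials has a subsequence
converging uniformly on `ℝ` to a trigonometric polynomial in the same class. -/
theorem finEquiv_class_seqCompact {n : ℕ} (lam : Fin n → ℝ)
    (hinj : Function.Injective lam) (A : ℕ → Fin n → ℂ)
    (hequiv : ∀ l m : ℕ, FinEquiv lam (A l) (A m)) :
    ∃ φ : ℕ → ℕ, StrictMono φ ∧ ∃ c : Fin n → ℂ, FinEquiv lam (A 0) c ∧
      TendstoUniformly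
        (fun m (t : ℝ) => ∑ j, A (φ m) j * Complex.exp (Complex.I * (lam j : ℂ) * (t : ℂ)))
        (fun t : ℝ => ∑ j, c j * Complex.exp (Complex.I * (lam j : ℂ) * (t : ℂ)))
        Filter.atTop :=
  finEquiv_class_seqCompact_general lam A hequiv
end
end
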